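/- If z₁, z₂ ∈ ℂ \ ℝ have imaginary parts of the same sign, then |m(z₁)m(z₂)/(1 - m(z₁)m(z₂))| ≤ C / min(|Im m(z₁)|, |Im m(z₂)|) for an absolute constant C. -/

import Mathlib

/-!
Both values `a = m z₁`, `b = m z₂` lie in the open unit disc (take the imaginary part of
`conj m · (m² + z m + 1) = 0`), so the numerator has norm at most one. For the denominator,
`conj b · (1 - a b) = conj b - ‖b‖² a` has imaginary part `-(Im b + ‖b‖² Im a)`, whose two
terms have the same sign; hence `|Im b| ≤ ‖b‖ ‖1 - a b‖ ≤ ‖1 - a b‖`. This gives `C = 1`.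
-/

/-- `m` is the Stieltjes transform of the semicircle law: the (unique) solution
of `m(z)^2 + z·m(z) + 1 = 0` with `Im z · Im m(z) > 0` for all `z ∈ ℂ \ ℝ`. -/
def IsStieltjesSC (m : ℂ → ℂ) : Prop :=
  ∀ z : ℂ, z.im ≠ 0 → m z ^ 2 + z * m z + 1 = 0 ∧ 0 < z.im * (m z).im

open ComplexConjugate

theorem Complex.normSq_lt_one_of_sq_add_mul_add_one_eq_zero {z a : ℂ}
    (heq : a ^ 2 + z * a + 1 = 0) (hsign : 0 < z.im * a.im) : Complex.normSq a < 1 := by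
  have ha : a ≠ 0 := by rintro rfl; simp at hsign
  have hconj : a * (normSq a : ℂ) + z * (normSq a : ℂ) + conj a = 0 := by
    rw [← Complex.mul_conj]
    linear_combination conj a * heq
  have him : a.im * (1 - normSq a) = z.im * normSq a := by
    have := congrArg Complex.im hconj
    simp only [add_im, mul_im, ofReal_re, ofReal_im, conj_im, zero_im] at this
    linarith
  have hkey : (z.im * a.im) * (1 - normSq a) = z.im ^ 2 * normSq a := by
    linear_combination z.im * him
  have hrhs : 0 < z.im ^ 2 * normSq a := by
    have : z.im ≠ 0 := by rintro h; simp [h] at hsign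
    exact mul_pos (by positivity) (normSq_pos.mpr ha)
  nlinarith

theorem IsStieltjesSC.norm_lt_one {m : ℂ → ℂ} (hm : IsStieltjesSC m) {z : ℂ} (hz : z.im ≠ 0) :
    ‖m z‖ < 1 := by
  obtain ⟨heq, hsign⟩ := hm z hz
  have := Complex.normSq_lt_one_of_sq_add_mul_add_one_eq_zero heq hsign
  rwa [Complex.normSq_eq_norm_sq, sq_lt_one_iff₀ (norm_nonneg _)] at this

theorem Complex.abs_im_le_norm_one_sub_mul {a b : ℂ} (hb : ‖b‖ ≤ 1) (hab : 0 ≤ a.im * b.im) :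
    |b.im| ≤ ‖1 - a * b‖ := by
  have him : (conj b * (1 - a * b)).im = -(b.im + normSq b * a.im) := by
    simp only [mul_im, mul_re, conj_re, conj_im, sub_re, sub_im, one_re, one_im, normSq_apply]
    ring
  have hsame : |b.im| ≤ |b.im + normSq b * a.im| := by
    rw [← sq_le_sq]
    nlinarith [normSq_nonneg b, sq_nonneg (normSq b * a.im)]
  calc |b.im| ≤ |(conj b * (1 - a * b)).im| := by rwa [him, abs_neg]
    _ ≤ ‖conj b * (1 - a * b)‖ := abs_im_le_norm _
    _ = ‖b‖ * ‖1 - a * b‖ := by rw [norm_mul, RCLike.norm_conj]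
    _ ≤ ‖1 - a * b‖ := mul_le_of_le_one_left (norm_nonneg _) hb

theorem Complex.norm_mul_div_one_sub_mul_le {a b : ℂ} (ha : ‖a‖ ≤ 1) (hb : ‖b‖ ≤ 1)
    (hab : 0 < a.im * b.im) : ‖a * b / (1 - a * b)‖ ≤ 1 / min |a.im| |b.im| := by
  have hmin : 0 < min |a.im| |b.im| :=
    lt_min (abs_pos.mpr (left_ne_zero_of_mul hab.ne')) (abs_pos.mpr (right_ne_zero_of_mul hab.ne'))
  have hden : min |a.im| |b.im| ≤ ‖1 - a * b‖ :=
    (min_le_right _ _).trans (abs_im_le_norm_one_sub_mul hb hab.le)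
  rw [norm_div, norm_mul]
  exact div_le_div₀ zero_le_one (mul_le_one₀ ha (norm_nonneg _) hb) hmin hden

/-- If `Im z₁` and `Im z₂` have the same sign, then
`|m(z₁)m(z₂)/(1 - m(z₁)m(z₂))| ≤ C / min(|Im m(z₁)|, |Im m(z₂)|)`
for an absolute constant `C`. -/
theorem q_bound_same_sign :
    ∃ C : ℝ, 0 < C ∧ ∀ m : ℂ → ℂ, IsStieltjesSC m →
      ∀ z₁ z₂ : ℂ, z₁.im ≠ 0 → z₂.im ≠ 0 → 0 < z₁.im * z₂.im →
        ‖m z₁ * m z₂ / (1 - m z₁ * m z₂)‖ ≤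
          C / min |(m z₁).im| |(m z₂).im| := by
  refine ⟨1, one_pos, fun m hm z₁ z₂ hz₁ hz₂ hz => ?_⟩
  have hsign : 0 < (m z₁).im * (m z₂).im := by
    have h := mul_pos (hm z₁ hz₁).2 (hm z₂ hz₂).2
    rw [mul_mul_mul_comm] at h
    exact pos_of_mul_pos_right h hz.le
  exact Complex.norm_mul_div_one_sub_mul_le (hm.norm_lt_one hz₁).le (hm.norm_lt_one hz₂).le hsign
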